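/- arXiv:2012.06719 — 3 statements merged into one kernel-verified Lean document; each statement's English description precedes it below -/
import Mathlib

section
/- R0 = (β1·S1*·p + β4·S2*·q + √M)/2 < 1 holds if and only if β1·S1*·p + β4·S2*·q < 2 and (1 - β1·S1*·p)·(1 - β4·S2*·q) > S1*·S2*·β2·β3·p·q, where M = (β1·S1*·p - β4·S2*·q)² + 4·S1*·S2*·β2·β3·p·q, assuming all of S1*, S2*, β1, β2, β3, β4, p, q are nonnegative. -/
/-!
`R0` is the larger root of `λ² - (x + y) λ + (x y - c)`, with `x = β1 S1* p`, `y = β4 S2* q`,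
`c = S1* S2* β2 β3 p q`. Since `(2 - (x + y))² - ((x - y)² + 4c) = 4((1 - x)(1 - y) - c)`,
squaring `√M < 2 - (x + y)` turns it into the determinant condition, and the trace condition is
exactly the positivity of the right-hand side that squaring needs.
-/

theorem Real.sqrt_lt_iff_pos_and_lt_sq {x y : ℝ} : √x < y ↔ 0 < y ∧ x < y ^ 2 :=
  ⟨fun h => have hy : 0 < y := (Real.sqrt_nonneg x).trans_lt h
    ⟨hy, (Real.sqrt_lt' hy).1 h⟩,
   fun ⟨hy, h⟩ => (Real.sqrt_lt' hy).2 h⟩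

theorem half_add_sqrt_lt_one_iff (x y c : ℝ) :
    (x + y + √((x - y) ^ 2 + 4 * c)) / 2 < 1 ↔ x + y < 2 ∧ c < (1 - x) * (1 - y) := by
  have hsq : (2 - (x + y)) ^ 2 - ((x - y) ^ 2 + 4 * c) = 4 * ((1 - x) * (1 - y) - c) := by ring
  calc (x + y + √((x - y) ^ 2 + 4 * c)) / 2 < 1
      ↔ √((x - y) ^ 2 + 4 * c) < 2 - (x + y) := by constructor <;> intro h <;> linarith
    _ ↔ 0 < 2 - (x + y) ∧ (x - y) ^ 2 + 4 * c < (2 - (x + y)) ^ 2 :=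
      Real.sqrt_lt_iff_pos_and_lt_sq
    _ ↔ x + y < 2 ∧ c < (1 - x) * (1 - y) := by
      refine and_congr ?_ ?_ <;> constructor <;> intro h <;> linarith

theorem R0_lt_one_iff_general
    (β1 β2 β3 β4 p q S1 S2 : ℝ)
    (M R0 : ℝ)
    (hM : M = (β1 * S1 * p - β4 * S2 * q) ^ 2 + 4 * S1 * S2 * β2 * β3 * p * q)
    (hR0 : R0 = (β1 * S1 * p + β4 * S2 * q + Real.sqrt M) / 2) :
    R0 < 1 ↔
      (β1 * S1 * p + β4 * S2 * q < 2 ∧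
        (1 - β1 * S1 * p) * (1 - β4 * S2 * q) > S1 * S2 * β2 * β3 * p * q) := by
  have h4c : 4 * S1 * S2 * β2 * β3 * p * q = 4 * (S1 * S2 * β2 * β3 * p * q) := by ring
  rw [hR0, hM, h4c, gt_iff_lt]
  exact half_add_sqrt_lt_one_iff _ _ _

/-- `R0 < 1` iff the trace-type condition and determinant-type condition hold. -/
theorem R0_lt_one_iff
    (β1 β2 β3 β4 p q S1 S2 : ℝ)
    (hS1 : 0 ≤ S1) (hS2 : 0 ≤ S2)
    (hβ1 : 0 ≤ β1) (hβ2 : 0 ≤ β2) (hβ3 : 0 ≤ β3) (hβ4 : 0 ≤ β4)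
    (hp : 0 ≤ p) (hq : 0 ≤ q)
    (M R0 : ℝ)
    (hM : M = (β1 * S1 * p - β4 * S2 * q) ^ 2 + 4 * S1 * S2 * β2 * β3 * p * q)
    (hR0 : R0 = (β1 * S1 * p + β4 * S2 * q + Real.sqrt M) / 2) :
    R0 < 1 ↔
      (β1 * S1 * p + β4 * S2 * q < 2 ∧
        (1 - β1 * S1 * p) * (1 - β4 * S2 * q) > S1 * S2 * β2 * β3 * p * q) :=
  R0_lt_one_iff_general β1 β2 β3 β4 p q S1 S2 M R0 hM hR0
end

section
/- If R0 < 1, where R0 = (β1·S1*·p + β4·S2*·q + √M)/2 with M = (β1·S1*·p - β4·S2*·q)² + 4·S1*·S2*·β2·β3·p·q, p = 1/(d1+μ+u11), q = 1/(d2+μ), and all parameters nonnegative with p, q > 0, then the matrix J = [[β1·S1* - (d1+μ+u11), β2·S1*],[β3·S2*, β4·S2* - (d2+μ)]] has trace(J) < 0 and det(J) > 0, hence both eigenvalues of J have negative real part. -/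
/-!
Write `A = d1 + μ + u11`, `B = d2 + μ`, so that `J = F - diag(A, B)` with `F ≥ 0`, and `R0` is the
larger eigenvalue of the next-generation matrix `F · diag(A, B)⁻¹`, whose diagonal entries are
`a = β1 S1 / A`, `b = β4 S2 / B` and whose off-diagonal product is `c = β2 β3 S1 S2 / (A B)`.
Since `|a - b| ≤ √((a - b)² + 4c)`, the bound `R0 < 1` forces `a, b < 1`, and squaring
`√((a - b)² + 4c) < 2 - a - b` gives `c < (1 - a)(1 - b)`. These three inequalities are exactly
`tr J = A (a - 1) + B (b - 1) < 0` and `det J = A B ((1 - a)(1 - b) - c) > 0`.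
-/

open Matrix

theorem lt_one_of_eigenvalue_bound_lt_one {a b c : ℝ} (hc : 0 ≤ c)
    (h : (a + b + √((a - b) ^ 2 + 4 * c)) / 2 < 1) :
    a < 1 ∧ b < 1 ∧ c < (1 - a) * (1 - b) := by
  have hdiff : |a - b| ≤ √((a - b) ^ 2 + 4 * c) := by
    rw [← Real.sqrt_sq_eq_abs]
    exact Real.sqrt_le_sqrt (by linarith)
  obtain ⟨hlow, hupp⟩ := abs_le.mp hdiff
  have hsqrt : √((a - b) ^ 2 + 4 * c) < 2 - a - b := by linarith
  have hsq : (a - b) ^ 2 + 4 * c < (2 - a - b) ^ 2 := by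
    calc (a - b) ^ 2 + 4 * c = √((a - b) ^ 2 + 4 * c) ^ 2 := (Real.sq_sqrt (by positivity)).symm
      _ < (2 - a - b) ^ 2 := pow_lt_pow_left₀ hsqrt (Real.sqrt_nonneg _) two_ne_zero
  refine ⟨by linarith, by linarith, by nlinarith⟩

theorem trace_neg_and_det_pos_of_sub_diagonal {f₁₁ f₁₂ f₂₁ f₂₂ A B : ℝ} (hA : 0 < A) (hB : 0 < B)
    (h₁₁ : f₁₁ * A⁻¹ < 1) (h₂₂ : f₂₂ * B⁻¹ < 1)
    (h : f₁₂ * f₂₁ * A⁻¹ * B⁻¹ < (1 - f₁₁ * A⁻¹) * (1 - f₂₂ * B⁻¹)) :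
    (!![f₁₁ - A, f₁₂; f₂₁, f₂₂ - B]).trace < 0 ∧ 0 < (!![f₁₁ - A, f₁₂; f₂₁, f₂₂ - B]).det := by
  rw [trace_fin_two_of, det_fin_two_of]
  rw [mul_inv_lt_iff₀ hA, one_mul] at h₁₁
  rw [mul_inv_lt_iff₀ hB, one_mul] at h₂₂
  have hdet : (f₁₁ - A) * (f₂₂ - B) - f₁₂ * f₂₁
      = A * B * ((1 - f₁₁ * A⁻¹) * (1 - f₂₂ * B⁻¹) - f₁₂ * f₂₁ * A⁻¹ * B⁻¹) := by
    field_simp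
    ring
  refine ⟨by linarith, ?_⟩
  rw [hdet]
  exact mul_pos (mul_pos hA hB) (sub_pos.mpr h)

theorem dfe_locally_stable_of_R0_lt_one_general
    (β1 β2 β3 β4 d1 d2 μ u11 S1 S2 : ℝ)
    (hS1 : 0 ≤ S1) (hS2 : 0 ≤ S2)
    (hβ2 : 0 ≤ β2) (hβ3 : 0 ≤ β3)
    (h1 : 0 < d1 + μ + u11) (h2 : 0 < d2 + μ)
    (p q M R0 : ℝ)
    (hp : p = 1 / (d1 + μ + u11)) (hq : q = 1 / (d2 + μ))
    (hM : M = (β1 * S1 * p - β4 * S2 * q) ^ 2 + 4 * S1 * S2 * β2 * β3 * p * q)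
    (hR0 : R0 = (β1 * S1 * p + β4 * S2 * q + Real.sqrt M) / 2)
    (hR0lt : R0 < 1)
    (J : Matrix (Fin 2) (Fin 2) ℝ)
    (hJ : J = !![β1 * S1 - (d1 + μ + u11), β2 * S1;
                 β3 * S2, β4 * S2 - (d2 + μ)]) :
    J.trace < 0 ∧ 0 < J.det := by
  rw [one_div] at hp hq
  subst hJ hp hq
  have hM' : M = (β1 * S1 * (d1 + μ + u11)⁻¹ - β4 * S2 * (d2 + μ)⁻¹) ^ 2
      + 4 * (β2 * S1 * (β3 * S2) * (d1 + μ + u11)⁻¹ * (d2 + μ)⁻¹) := by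
    rw [hM]; ring
  rw [hR0, hM'] at hR0lt
  obtain ⟨h₁₁, h₂₂, h⟩ := lt_one_of_eigenvalue_bound_lt_one (by positivity) hR0lt
  exact trace_neg_and_det_pos_of_sub_diagonal h1 h2 h₁₁ h₂₂ h

/-- If `R0 < 1`, then the infected-compartment Jacobian at the disease-free
equilibrium has negative trace and positive determinant, hence both of its
eigenvalues have negative real part. -/
theorem dfe_locally_stable_of_R0_lt_one
    (β1 β2 β3 β4 d1 d2 μ u11 S1 S2 : ℝ)
    (hS1 : 0 ≤ S1) (hS2 : 0 ≤ S2)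
    (hβ1 : 0 ≤ β1) (hβ2 : 0 ≤ β2) (hβ3 : 0 ≤ β3) (hβ4 : 0 ≤ β4)
    (h1 : 0 < d1 + μ + u11) (h2 : 0 < d2 + μ)
    (p q M R0 : ℝ)
    (hp : p = 1 / (d1 + μ + u11)) (hq : q = 1 / (d2 + μ))
    (hM : M = (β1 * S1 * p - β4 * S2 * q) ^ 2 + 4 * S1 * S2 * β2 * β3 * p * q)
    (hR0 : R0 = (β1 * S1 * p + β4 * S2 * q + Real.sqrt M) / 2)
    (hR0lt : R0 < 1)
    (J : Matrix (Fin 2) (Fin 2) ℝ)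
    (hJ : J = !![β1 * S1 - (d1 + μ + u11), β2 * S1;
                 β3 * S2, β4 * S2 - (d2 + μ)]) :
    J.trace < 0 ∧ 0 < J.det :=
  dfe_locally_stable_of_R0_lt_one_general β1 β2 β3 β4 d1 d2 μ u11 S1 S2 hS1 hS2 hβ2 hβ3 h1 h2 p q M
    R0 hp hq hM hR0 hR0lt J hJ
end

section
/- At the disease-free equilibrium, R0 is a decreasing function of the treatment rate u11: if u11 < u11' and β1·S1* > 0, then R0(u11') < R0(u11), where R0(u) = (β1·S1*·p(u) + β4·S2*·q + √((β1·S1*·p(u) - β4·S2*·q)² + 4·S1*·S2*·β2·β3·p(u)·q))/2 with p(u) = 1/(d1+μ+u) and q = 1/(d2+μ), assuming S1*, S2* > 0, β2·β3 > 0, d1+μ > 0, d2+μ > 0. -/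
/-!
With `a = β1 S1`, `b = β4 S2 q` and `c = 4 S1 S2 β2 β3 q` we have `2 R0 u = g (p u) + b`, where
`g x = a x + √((a x - b)² + c x)`. As `p` decreases in `u`, it suffices that `g` strictly increases
on `x ≥ 0`. The square root `s` at `x` satisfies `s ≥ |a x - b| ≥ b - a x`, and squaring
`s - a (y - x) < √((a y - b)² + c y)` reduces it to `2 a (y - x) (b - a x - s) < c (y - x)`,
which holds because `c > 0`.
-/

lemma sqrt_sub_mul_lt_sqrt {a b c x y : ℝ} (ha : 0 < a) (hc : 0 < c) (hx : 0 ≤ x) (hxy : x < y) :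
    Real.sqrt ((a * x - b) ^ 2 + c * x) - a * (y - x) < Real.sqrt ((a * y - b) ^ 2 + c * y) := by
  set s := Real.sqrt ((a * x - b) ^ 2 + c * x)
  have hs_sq : s ^ 2 = (a * x - b) ^ 2 + c * x := Real.sq_sqrt (by positivity)
  have hs_ge : b - a * x ≤ s := by
    calc b - a * x ≤ |a * x - b| := by rw [abs_sub_comm]; exact le_abs_self _
      _ = Real.sqrt ((a * x - b) ^ 2) := (Real.sqrt_sq_eq_abs _).symm
      _ ≤ s := Real.sqrt_le_sqrt (by nlinarith)
  rcases le_or_gt (s - a * (y - x)) 0 with hneg | hpos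
  · exact hneg.trans_lt (Real.sqrt_pos.mpr (by nlinarith))
  · rw [Real.lt_sqrt hpos.le]
    nlinarith [mul_le_mul_of_nonneg_left hs_ge (by nlinarith : (0 : ℝ) ≤ 2 * a * (y - x)),
      mul_pos hc (sub_pos.mpr hxy)]

lemma strictMonoOn_mul_add_sqrt {a b c : ℝ} (ha : 0 < a) (hc : 0 < c) :
    StrictMonoOn (fun x => a * x + Real.sqrt ((a * x - b) ^ 2 + c * x)) (Set.Ici 0) := by
  intro x hx y _ hxy
  have := sqrt_sub_mul_lt_sqrt (b := b) ha hc hx hxy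
  dsimp only
  linarith

/-- `R0` is a strictly decreasing function of the treatment rate `u11`. -/
theorem R0_decreasing_in_treatment
    (β1 β2 β3 β4 d1 d2 μ S1 S2 : ℝ)
    (hS1 : 0 < S1) (hS2 : 0 < S2)
    (hβ1S1 : 0 < β1 * S1) (hβ2β3 : 0 < β2 * β3)
    (hd1μ : 0 < d1 + μ) (hd2μ : 0 < d2 + μ)
    (p : ℝ → ℝ) (hp : p = fun u => 1 / (d1 + μ + u))
    (q : ℝ) (hq : q = 1 / (d2 + μ))
    (R0 : ℝ → ℝ)
    (hR0 : R0 = fun u =>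
      (β1 * S1 * p u + β4 * S2 * q
        + Real.sqrt ((β1 * S1 * p u - β4 * S2 * q) ^ 2
            + 4 * S1 * S2 * β2 * β3 * p u * q)) / 2)
    (u11 u11' : ℝ) (hu11 : 0 ≤ u11) (hlt : u11 < u11') :
    R0 u11' < R0 u11 := by
  have hR0_eq : ∀ u, R0 u = (β1 * S1 * p u + Real.sqrt ((β1 * S1 * p u - β4 * S2 * q) ^ 2
      + 4 * S1 * S2 * β2 * β3 * q * p u) + β4 * S2 * q) / 2 := by
    intro u
    simp only [hR0, mul_right_comm _ (p u) q, add_right_comm _ (β4 * S2 * q)]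
  have hq_pos : 0 < q := hq ▸ one_div_pos.mpr hd2μ
  have hc : 0 < 4 * S1 * S2 * β2 * β3 * q :=
    (by positivity : 0 < 4 * S1 * S2 * (β2 * β3) * q).trans_eq (by ring)
  have hp_pos : 0 < p u11' := hp ▸ one_div_pos.mpr (by linarith)
  have hp_lt : p u11' < p u11 := hp ▸ one_div_lt_one_div_of_lt (by linarith) (by linarith)
  have hmono := strictMonoOn_mul_add_sqrt (b := β4 * S2 * q) hβ1S1 hc
    (Set.mem_Ici.mpr hp_pos.le) (Set.mem_Ici.mpr (hp_pos.trans hp_lt).le) hp_lt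
  rw [hR0_eq, hR0_eq]
  linarith
end
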